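/- Suppose a and B satisfy the componentwise linear growth bound |a^d(x)| ≤ C(1 + ‖x‖₂) and |B^{d,m}(x)| ≤ C(1 + ‖x‖₂) for all x, d, m, with C > 0. Let ζ : Ω → ℝ^M have components with E[ζ^m] = 0, E[(ζ^m)²] = 1, and E[ζ^m ζ^n] = 0 for m ≠ n, and let ψ : Ω → ℝ^M be square-integrable with E[ψ] = 0 and |E[ψ^m ψ^n]| ≤ S for all m, n, where S > 0. Then there exists a constant C' > 0 such that for all 0 < ε < 1, all y ∈ ℝ^D, and all d₁, d₂ = 1,…,D, |E[Δ_ζ^{d₁} Δ_ζ^{d₂} − Δ_ψ^{d₁} Δ_ψ^{d₂}]| ≤ C'(1 + ‖y‖₂²) ε. That is, a scheme whose noise is constrained only in its first moment matches the second moments of the Euler–Maruyama one-step increment only to order ε (rather than ε²). -/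

import Mathlib

/-!
The drift enters `Δ_χ^{d₁} Δ_χ^{d₂}` only through the deterministic term `ε² a^{d₁} a^{d₂}`, and
the terms linear in the noise have mean zero, so
`E[Δ_ζ^{d₁} Δ_ζ^{d₂} − Δ_ψ^{d₁} Δ_ψ^{d₂}] = ε ∑_{m,n} B^{d₁,m} B^{d₂,n} (E[ζ^m ζ^n] − E[ψ^m ψ^n])`.
Each covariance difference is at most `1 + S`, each coefficient at most `C (1 + ‖y‖)`, and
`(1 + ‖y‖)² ≤ 2 (1 + ‖y‖²)`.
-/

open MeasureTheory ProbabilityTheory Finset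

/-- `Δ_χ^d` with `A = a^d(y)`, `b = B^{d,·}(y)` and `x = χ(ω)`. -/
noncomputable def oneStepIncrement {ι : Type*} [Fintype ι] (ε A : ℝ) (b x : ι → ℝ) : ℝ :=
  ε * A + Real.sqrt ε * ∑ i, b i * x i

lemma abs_sum_sum_mul_mul_le {ι κ : Type*} [Fintype ι] [Fintype κ] {u : ι → ℝ} {v : κ → ℝ}
    {k : ι → κ → ℝ} {U V L : ℝ} (hu : ∀ i, |u i| ≤ U) (hv : ∀ j, |v j| ≤ V)
    (hk : ∀ i j, |k i j| ≤ L) :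
    |∑ i, ∑ j, u i * v j * k i j| ≤ Fintype.card ι * Fintype.card κ * (U * V * L) := by
  calc |∑ i, ∑ j, u i * v j * k i j|
      ≤ ∑ i, ∑ j, |u i * v j * k i j| :=
        (abs_sum_le_sum_abs _ _).trans (sum_le_sum fun i _ => abs_sum_le_sum_abs _ _)
    _ ≤ ∑ _i : ι, ∑ _j : κ, U * V * L := by
        gcongr with i _ j _
        rw [abs_mul, abs_mul]
        have hU : 0 ≤ U := (abs_nonneg _).trans (hu i)
        have hV : 0 ≤ V := (abs_nonneg _).trans (hv j)
        gcongr
        exacts [hu i, hv j, hk i j]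
    _ = _ := by simp [mul_assoc]

section Moments

variable {Ω ι : Type*} [Fintype ι] {mΩ : MeasurableSpace Ω} {μ : Measure Ω} {χ : Ω → ι → ℝ}

lemma memLp_two_sum_mul (c : ι → ℝ) (hχ : ∀ i, MemLp (fun ω => χ ω i) 2 μ) :
    MemLp (fun ω => ∑ i, c i * χ ω i) 2 μ :=
  memLp_finsetSum _ fun i _ => (hχ i).const_mul (c i)

lemma integrable_mul_of_memLp_two {f g : Ω → ℝ} (hf : MemLp f 2 μ) (hg : MemLp g 2 μ) :
    Integrable (fun ω => f ω * g ω) μ :=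
  hf.integrable_mul hg

lemma integral_sum_mul_eq_zero [IsFiniteMeasure μ] (c : ι → ℝ)
    (hχ : ∀ i, MemLp (fun ω => χ ω i) 2 μ) (hχ1 : ∀ i, ∫ ω, χ ω i ∂μ = 0) :
    ∫ ω, ∑ i, c i * χ ω i ∂μ = 0 := by
  rw [integral_finsetSum _ fun i _ => ((hχ i).integrable one_le_two).const_mul (c i)]
  simp [integral_const_mul, hχ1]

lemma integral_sum_mul_mul_sum_mul (c₁ c₂ : ι → ℝ) (hχ : ∀ i, MemLp (fun ω => χ ω i) 2 μ) :
    ∫ ω, (∑ i, c₁ i * χ ω i) * (∑ j, c₂ j * χ ω j) ∂μ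
      = ∑ i, ∑ j, c₁ i * c₂ j * ∫ ω, χ ω i * χ ω j ∂μ := by
  have hint : ∀ i j, Integrable (fun ω => c₁ i * c₂ j * (χ ω i * χ ω j)) μ := fun i j =>
    (integrable_mul_of_memLp_two (hχ i) (hχ j)).const_mul _
  have hexpand : ∀ ω, (∑ i, c₁ i * χ ω i) * (∑ j, c₂ j * χ ω j)
      = ∑ i, ∑ j, c₁ i * c₂ j * (χ ω i * χ ω j) := fun ω => by
    rw [sum_mul_sum]; exact sum_congr rfl fun i _ => sum_congr rfl fun j _ => by ring
  simp_rw [hexpand, ← integral_const_mul]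
  rw [integral_finsetSum _ fun i _ => integrable_finsetSum _ fun j _ => hint i j]
  exact sum_congr rfl fun i _ => integral_finsetSum _ fun j _ => hint i j

lemma memLp_oneStepIncrement [IsFiniteMeasure μ] (ε A : ℝ) (c : ι → ℝ)
    (hχ : ∀ i, MemLp (fun ω => χ ω i) 2 μ) :
    MemLp (fun ω => oneStepIncrement ε A c (χ ω)) 2 μ :=
  ((memLp_const (ε * A)).add ((memLp_two_sum_mul c hχ).const_mul (Real.sqrt ε)) :)

lemma integral_oneStepIncrement_mul [IsProbabilityMeasure μ] {ε : ℝ} (hε : 0 ≤ ε)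
    (A₁ A₂ : ℝ) (c₁ c₂ : ι → ℝ) (hχ : ∀ i, MemLp (fun ω => χ ω i) 2 μ)
    (hχ1 : ∀ i, ∫ ω, χ ω i ∂μ = 0) :
    ∫ ω, oneStepIncrement ε A₁ c₁ (χ ω) * oneStepIncrement ε A₂ c₂ (χ ω) ∂μ
      = ε ^ 2 * A₁ * A₂ + ε * ∑ i, ∑ j, c₁ i * c₂ j * ∫ ω, χ ω i * χ ω j ∂μ := by
  set X₁ := fun ω => ∑ i, c₁ i * χ ω i
  set X₂ := fun ω => ∑ i, c₂ i * χ ω i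
  have hX₁ : MemLp X₁ 2 μ := memLp_two_sum_mul c₁ hχ
  have hX₂ : MemLp X₂ 2 μ := memLp_two_sum_mul c₂ hχ
  have hexpand : ∀ ω, oneStepIncrement ε A₁ c₁ (χ ω) * oneStepIncrement ε A₂ c₂ (χ ω)
      = ε ^ 2 * A₁ * A₂ + ε * A₁ * Real.sqrt ε * X₂ ω + ε * A₂ * Real.sqrt ε * X₁ ω
        + ε * (X₁ ω * X₂ ω) := fun ω => by
    simp only [oneStepIncrement, X₁, X₂]
    linear_combination (∑ i, c₁ i * χ ω i) * (∑ i, c₂ i * χ ω i) * Real.mul_self_sqrt hε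
  have hI₁ := (hX₁.integrable one_le_two).const_mul (ε * A₂ * Real.sqrt ε)
  have hI₂ := (hX₂.integrable one_le_two).const_mul (ε * A₁ * Real.sqrt ε)
  have hI₁₂ := (integrable_mul_of_memLp_two hX₁ hX₂).const_mul ε
  simp_rw [hexpand]
  rw [integral_add (((integrable_const _).fun_add hI₂).fun_add hI₁) hI₁₂,
    integral_add ((integrable_const _).fun_add hI₂) hI₁, integral_add (integrable_const _) hI₂,
    integral_const_mul (ε * A₁ * Real.sqrt ε), integral_const_mul (ε * A₂ * Real.sqrt ε),
    integral_const_mul ε, integral_sum_mul_eq_zero c₁ hχ hχ1, integral_sum_mul_eq_zero c₂ hχ hχ1,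
    show ∫ ω, X₁ ω * X₂ ω ∂μ = _ from integral_sum_mul_mul_sum_mul c₁ c₂ hχ]
  simp

lemma integral_oneStepIncrement_mul_sub [IsProbabilityMeasure μ] {ε : ℝ} (hε : 0 ≤ ε)
    (A₁ A₂ : ℝ) (c₁ c₂ : ι → ℝ) {φ : Ω → ι → ℝ}
    (hχ : ∀ i, MemLp (fun ω => χ ω i) 2 μ) (hφ : ∀ i, MemLp (fun ω => φ ω i) 2 μ)
    (hχ1 : ∀ i, ∫ ω, χ ω i ∂μ = 0) (hφ1 : ∀ i, ∫ ω, φ ω i ∂μ = 0) :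
    ∫ ω, (oneStepIncrement ε A₁ c₁ (χ ω) * oneStepIncrement ε A₂ c₂ (χ ω)
        - oneStepIncrement ε A₁ c₁ (φ ω) * oneStepIncrement ε A₂ c₂ (φ ω)) ∂μ
      = ε * ∑ i, ∑ j, c₁ i * c₂ j
          * ((∫ ω, χ ω i * χ ω j ∂μ) - ∫ ω, φ ω i * φ ω j ∂μ) := by
  rw [integral_sub
    (integrable_mul_of_memLp_two (memLp_oneStepIncrement ε A₁ c₁ hχ)
      (memLp_oneStepIncrement ε A₂ c₂ hχ))
    (integrable_mul_of_memLp_two (memLp_oneStepIncrement ε A₁ c₁ hφ)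
      (memLp_oneStepIncrement ε A₂ c₂ hφ)),
    integral_oneStepIncrement_mul hε _ _ _ _ hχ hχ1,
    integral_oneStepIncrement_mul hε _ _ _ _ hφ hφ1]
  simp only [mul_sub, sum_sub_distrib]
  ring

end Moments

theorem first_moment_only_scheme_order_eps_general
    (D M : ℕ) (hM : 1 ≤ M)
    (a : EuclideanSpace ℝ (Fin D) → Fin D → ℝ)
    (B : EuclideanSpace ℝ (Fin D) → Fin D → Fin M → ℝ)
    (C : ℝ) (hC : 0 < C)
    (hB : ∀ x d m, |B x d m| ≤ C * (1 + ‖x‖))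
    (Ω : Type*) [MeasureSpace Ω] [IsProbabilityMeasure (ℙ : Measure Ω)]
    (ζ ψ : Ω → Fin M → ℝ)
    (hζL2 : ∀ m, MemLp (fun ω => ζ ω m) 2)
    (hψL2 : ∀ m, MemLp (fun ω => ψ ω m) 2)
    (hζ1 : ∀ m, (∫ ω, ζ ω m) = 0)
    (hζ2 : ∀ m, (∫ ω, (ζ ω m) ^ 2) = 1)
    (hζc : ∀ m n, m ≠ n → (∫ ω, ζ ω m * ζ ω n) = 0)
    (hψ1 : ∀ m, (∫ ω, ψ ω m) = 0)
    (S : ℝ) (hS : 0 < S)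
    (hψ2 : ∀ m n, |∫ ω, ψ ω m * ψ ω n| ≤ S) :
    ∃ C' : ℝ, 0 < C' ∧ ∀ ε : ℝ, 0 < ε → ε < 1 →
      ∀ y : EuclideanSpace ℝ (Fin D), ∀ d₁ d₂ : Fin D,
        |∫ ω, ((ε * a y d₁ + Real.sqrt ε * ∑ m, B y d₁ m * ζ ω m)
             * (ε * a y d₂ + Real.sqrt ε * ∑ m, B y d₂ m * ζ ω m)
             - (ε * a y d₁ + Real.sqrt ε * ∑ m, B y d₁ m * ψ ω m)
             * (ε * a y d₂ + Real.sqrt ε * ∑ m, B y d₂ m * ψ ω m))|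
          ≤ C' * (1 + ‖y‖ ^ 2) * ε := by
  have hM₀ : (0 : ℝ) < M := by exact_mod_cast hM
  refine ⟨2 * C ^ 2 * (M * M * (1 + S)), by positivity, fun ε hε _ y d₁ d₂ => ?_⟩
  have hcov : ∀ m n, |(∫ ω, ζ ω m * ζ ω n) - ∫ ω, ψ ω m * ψ ω n| ≤ 1 + S := fun m n => by
    have hζmn : |∫ ω, ζ ω m * ζ ω n| ≤ 1 := by
      rcases eq_or_ne m n with rfl | hmn
      · simp_rw [← sq, hζ2, abs_one, le_refl]
      · simp [hζc m n hmn]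
    exact (abs_sub _ _).trans (add_le_add hζmn (hψ2 m n))
  have hsum := abs_sum_sum_mul_mul_le (hB y d₁) (hB y d₂) hcov
  rw [Fintype.card_fin] at hsum
  change |∫ ω, (oneStepIncrement ε (a y d₁) (B y d₁) (ζ ω)
      * oneStepIncrement ε (a y d₂) (B y d₂) (ζ ω)
      - oneStepIncrement ε (a y d₁) (B y d₁) (ψ ω)
      * oneStepIncrement ε (a y d₂) (B y d₂) (ψ ω))| ≤ _
  rw [integral_oneStepIncrement_mul_sub hε.le _ _ _ _ hζL2 hψL2 hζ1 hψ1, abs_mul, abs_of_pos hε]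
  calc ε * |_| ≤ ε * (M * M * (C * (1 + ‖y‖) * (C * (1 + ‖y‖)) * (1 + S))) := by gcongr
    _ = C ^ 2 * (M * M * (1 + S)) * (1 + ‖y‖) ^ 2 * ε := by ring
    _ ≤ C ^ 2 * (M * M * (1 + S)) * (2 * (1 + ‖y‖ ^ 2)) * ε := by
        gcongr
        simpa using add_sq_le (a := (1 : ℝ)) (b := ‖y‖)
    _ = _ := by ring

/-- if the noise `ψ` is constrained only in its first moment (with
second moments merely bounded by `S`), then the second moments of its one-step
increment match those of the Euler–Maruyama increment (noise `ζ`) only to order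
`ε`: `|E[Δ_ζ^{d₁} Δ_ζ^{d₂} − Δ_ψ^{d₁} Δ_ψ^{d₂}]| ≤ C'(1 + ‖y‖₂²) ε`. -/
theorem first_moment_only_scheme_order_eps
    (D M : ℕ) (hD : 1 ≤ D) (hM : 1 ≤ M)
    (a : EuclideanSpace ℝ (Fin D) → Fin D → ℝ)
    (B : EuclideanSpace ℝ (Fin D) → Fin D → Fin M → ℝ)
    (C : ℝ) (hC : 0 < C)
    (ha : ∀ x d, |a x d| ≤ C * (1 + ‖x‖))
    (hB : ∀ x d m, |B x d m| ≤ C * (1 + ‖x‖))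
    (Ω : Type*) [MeasureSpace Ω] [IsProbabilityMeasure (ℙ : Measure Ω)]
    (ζ ψ : Ω → Fin M → ℝ)
    (hζL2 : ∀ m, MemLp (fun ω => ζ ω m) 2)
    (hψL2 : ∀ m, MemLp (fun ω => ψ ω m) 2)
    (hζ1 : ∀ m, (∫ ω, ζ ω m) = 0)
    (hζ2 : ∀ m, (∫ ω, (ζ ω m) ^ 2) = 1)
    (hζc : ∀ m n, m ≠ n → (∫ ω, ζ ω m * ζ ω n) = 0)
    (hψ1 : ∀ m, (∫ ω, ψ ω m) = 0)
    (S : ℝ) (hS : 0 < S)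
    (hψ2 : ∀ m n, |∫ ω, ψ ω m * ψ ω n| ≤ S) :
    ∃ C' : ℝ, 0 < C' ∧ ∀ ε : ℝ, 0 < ε → ε < 1 →
      ∀ y : EuclideanSpace ℝ (Fin D), ∀ d₁ d₂ : Fin D,
        |∫ ω, ((ε * a y d₁ + Real.sqrt ε * ∑ m, B y d₁ m * ζ ω m)
             * (ε * a y d₂ + Real.sqrt ε * ∑ m, B y d₂ m * ζ ω m)
             - (ε * a y d₁ + Real.sqrt ε * ∑ m, B y d₁ m * ψ ω m)
             * (ε * a y d₂ + Real.sqrt ε * ∑ m, B y d₂ m * ψ ω m))|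
          ≤ C' * (1 + ‖y‖ ^ 2) * ε :=
  first_moment_only_scheme_order_eps_general D M hM a B C hC hB Ω ζ ψ hζL2 hψL2 hζ1 hζ2 hζc hψ1 S hS
    hψ2
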